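/- There is no enumeration (x_1,...,x_6) of P^1(F_5) such that the three cross ratios ρ_i = ρ(x_i, x_{i+1}, x_{i+2}, x_{i+3}), i = 1,2,3, are pairwise distinct; equivalently, the sharply 3-transitive action of PGL_2(F_5) on P^1(F_5) admits no sequencing. -/

import Mathlib

open scoped LinearAlgebra.Projectivization

instance : Fact (Nat.Prime 5) := ⟨by norm_num⟩

/-- The action of an invertible matrix on the projective line `P¹(F) = ℙ F (Fin 2 → F)`,
i.e. the fractional linear transformation determined by `A`. -/
noncomputable def fracLin {F : Type*} [Field F] (A : GL (Fin 2) F) :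
    ℙ F (Fin 2 → F) → ℙ F (Fin 2 → F) :=
  Projectivization.map (Matrix.mulVecLin (A : Matrix (Fin 2) (Fin 2) F)) (by
    intro u v h
    have h2 := congrArg
      (fun w => Matrix.mulVec ((A⁻¹ : GL (Fin 2) F) : Matrix (Fin 2) (Fin 2) F) w) h
    have h1 : ((A⁻¹ : GL (Fin 2) F) : Matrix (Fin 2) (Fin 2) F) *
        ((A : GL (Fin 2) F) : Matrix (Fin 2) (Fin 2) F) = 1 := A.inv_mul
    simpa only [Matrix.mulVecLin_apply, Matrix.mulVec_mulVec, h1, Matrix.one_mulVec] using h2)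

/-!
`PGL₂(F)` acts transitively on triples of distinct points of `P¹(F)`. Moving `x₁, x₂, x₃`
to `0, ∞, 1` and conjugating back, it suffices to treat enumerations `(0, ∞, 1, a, b, c)`
with `{a, b, c} = {2, 3, 4}`. For each of these six a search over the `2 × 2` matrices
over `F₅` finds two of the three windows related by a Möbius transformation.
-/

open Projectivization Matrix

theorem fracLin_eq_smul {K : Type*} [Field K] (A : GL (Fin 2) K) (p : ℙ K (Fin 2 → K)) :
    fracLin A p = A • p :=
  rfl

namespace ProjectiveLine

variable {K : Type*} [Field K]

def wedge (u w : Fin 2 → K) : K := u 0 * w 1 - u 1 * w 0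

theorem mk_eq_mk_iff_wedge_eq_zero {u w : Fin 2 → K} (hu : u ≠ 0) (hw : w ≠ 0) :
    mk K u hu = mk K w hw ↔ wedge u w = 0 := by
  rw [mk_eq_mk_iff']
  constructor
  · rintro ⟨a, rfl⟩
    simp only [wedge, Pi.smul_apply, smul_eq_mul]
    ring
  · intro h
    obtain ⟨i, hi⟩ := Function.ne_iff.1 hw
    refine ⟨u i / w i, funext fun k => ?_⟩
    rw [Pi.smul_apply, smul_eq_mul, div_mul_eq_mul_div, div_eq_iff hi]
    rw [wedge, sub_eq_zero] at h
    fin_cases i <;> fin_cases k <;> grind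

theorem smul_mk_eq_mk_iff (A : GL (Fin 2) K) {u w : Fin 2 → K} (hu : u ≠ 0) (hw : w ≠ 0) :
    A • mk K u hu = mk K w hw ↔ wedge ((A : Matrix (Fin 2) (Fin 2) K) *ᵥ u) w = 0 := by
  rw [smul_mk]
  exact mk_eq_mk_iff_wedge_eq_zero _ hw

def affinePoint (t : K) : ℙ K (Fin 2 → K) := mk K ![1, t] fun h => one_ne_zero (congrFun h 0)

def pointAtInfinity : ℙ K (Fin 2 → K) := mk K ![0, 1] fun h => one_ne_zero (congrFun h 1)

theorem affinePoint_injective : Function.Injective (affinePoint : K → ℙ K (Fin 2 → K)) := by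
  intro s t h
  rw [affinePoint, affinePoint, mk_eq_mk_iff_wedge_eq_zero] at h
  simpa [wedge, sub_eq_zero, eq_comm] using h

theorem exists_eq_affinePoint {p : ℙ K (Fin 2 → K)} (hp : p ≠ pointAtInfinity) :
    ∃ t, p = affinePoint t := by
  induction p using Projectivization.ind with
  | h u hu =>
    have hu0 : u 0 ≠ 0 := fun h0 =>
      hp ((mk_eq_mk_iff_wedge_eq_zero hu _).2 (by simp [wedge, h0]))
    refine ⟨u 1 / u 0, (mk_eq_mk_iff_wedge_eq_zero hu _).2 ?_⟩
    simp [wedge, mul_div_cancel₀ _ hu0]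

theorem exists_smul_standardFrame {p q r : ℙ K (Fin 2 → K)} (hpq : p ≠ q) (hpr : p ≠ r)
    (hqr : q ≠ r) : ∃ A : GL (Fin 2) K,
      A • affinePoint 0 = p ∧ A • pointAtInfinity = q ∧ A • affinePoint 1 = r := by
  induction p using Projectivization.ind with | h u hu =>
  induction q using Projectivization.ind with | h w hw =>
  induction r using Projectivization.ind with | h z hz =>
  replace hqr := hqr.symm
  rw [Ne, mk_eq_mk_iff_wedge_eq_zero] at hpq hpr hqr
  -- the columns are the multiples of `u` and `w` that add up to `wedge u w • z`
  let M : Matrix (Fin 2) (Fin 2) K :=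
    !![wedge z w * u 0, wedge u z * w 0; wedge z w * u 1, wedge u z * w 1]
  have hM : M.det ≠ 0 := by
    have : M.det = wedge z w * wedge u z * wedge u w := by
      simp only [M, det_fin_two_of, wedge]
      ring
    rw [this]
    exact mul_ne_zero (mul_ne_zero hqr hpr) hpq
  refine ⟨GeneralLinearGroup.mkOfDetNeZero M hM, ?_, ?_, ?_⟩ <;>
  · dsimp only [affinePoint, pointAtInfinity]
    rw [smul_mk_eq_mk_iff]
    simp only [wedge, GeneralLinearGroup.val_mkOfDetNeZero, mulVec_cons, mulVec_empty, M,
      Pi.add_apply, Pi.zero_apply, Function.comp_apply, one_smul, zero_smul, add_zero, zero_add,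
      cons_val_zero, cons_val_one, cons_val_fin_one, head_cons, tail_cons]
    ring

end ProjectiveLine

namespace Sequence

variable {G α : Type*}

def window (i : Fin 3) (j : Fin 4) : Fin 6 := ⟨i + j, by omega⟩

variable (G) in
def WindowsInSameOrbit [SMul G α] (x : Fin 6 → α) (i₁ i₂ : Fin 3) : Prop :=
  ∃ g : G, ∀ j, g • x (window i₁ j) = x (window i₂ j)

theorem WindowsInSameOrbit.smul [Group G] [MulAction G α] {x : Fin 6 → α} {i₁ i₂ : Fin 3}
    (h : WindowsInSameOrbit G x i₁ i₂) (g : G) : WindowsInSameOrbit G (g • x) i₁ i₂ := by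
  obtain ⟨A, hA⟩ := h
  exact ⟨g * A * g⁻¹, fun j => by simp [mul_smul, hA]⟩

end Sequence

namespace ProjectiveLine

open Sequence

def normalizedSeq (a b c : ZMod 5) : Fin 6 → Fin 2 → ZMod 5 :=
  ![![1, 0], ![0, 1], ![1, 1], ![1, a], ![1, b], ![1, c]]

theorem exists_windows_wedge_eq_zero (a b c : ZMod 5) (h : [0, 1, a, b, c].Nodup) :
    ∃ i₁ i₂ : Fin 3, i₁ ≠ i₂ ∧ ∃ p q r s : ZMod 5, p * s - q * r ≠ 0 ∧ ∀ j,
      wedge (!![p, q; r, s] *ᵥ normalizedSeq a b c (window i₁ j))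
        (normalizedSeq a b c (window i₂ j)) = 0 := by
  revert a b c
  decide +kernel

theorem normalizedSeq_ne_zero (a b c : ZMod 5) (s : Fin 6) : normalizedSeq a b c s ≠ 0 := by
  fin_cases s <;> simp [normalizedSeq]

theorem exists_windowsInSameOrbit_of_normalized {y : Fin 6 → ℙ (ZMod 5) (Fin 2 → ZMod 5)}
    (hy : Function.Injective y) (h0 : y 0 = affinePoint 0) (h1 : y 1 = pointAtInfinity)
    (h2 : y 2 = affinePoint 1) :
    ∃ i₁ i₂ : Fin 3, i₁ ≠ i₂ ∧ WindowsInSameOrbit (GL (Fin 2) (ZMod 5)) y i₁ i₂ := by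
  have chart (s : Fin 6) (hs : s ≠ 1) : ∃ t, y s = affinePoint t :=
    exists_eq_affinePoint (h1 ▸ hy.ne hs)
  obtain ⟨a, ha⟩ := chart 3 (by decide)
  obtain ⟨b, hb⟩ := chart 4 (by decide)
  obtain ⟨c, hc⟩ := chart 5 (by decide)
  have hseq : y = fun s => mk _ (normalizedSeq a b c s) (normalizedSeq_ne_zero a b c s) := by
    funext s
    fin_cases s <;> assumption
  have hnodup : [0, 1, a, b, c].Nodup := by
    have hmap : ([0, 2, 3, 4, 5] : List (Fin 6)).map y = [0, 1, a, b, c].map affinePoint := by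
      simp [h0, h2, ha, hb, hc]
    exact (hmap ▸ (List.Nodup.map hy (by decide))).of_map _
  obtain ⟨i₁, i₂, hne, p, q, r, s, hdet, hwedge⟩ := exists_windows_wedge_eq_zero a b c hnodup
  refine ⟨i₁, i₂, hne, GeneralLinearGroup.mkOfDetNeZero !![p, q; r, s] (by rwa [det_fin_two_of]),
    fun j => ?_⟩
  rw [hseq]
  exact (smul_mk_eq_mk_iff _ _ _).2 (hwedge j)

end ProjectiveLine

open ProjectiveLine Sequence

/-- The sharply 3-transitive action of `PGL₂(F₅)` on `P¹(F₅)` admits no sequencing: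
for every enumeration `(x₁,…,x₆)` of the 6 points of `P¹(F₅)`, the three windows
`(x_i, x_{i+1}, x_{i+2}, x_{i+3})`, `i = 1, 2, 3`, do not lie in pairwise distinct
`PGL₂(F₅)`-orbits, i.e. their cross ratios are not pairwise distinct. -/
theorem stmt_13 (x : Fin 6 ≃ ℙ (ZMod 5) (Fin 2 → ZMod 5)) :
    ∃ i₁ i₂ : Fin 3, i₁ ≠ i₂ ∧
      ∃ A : GL (Fin 2) (ZMod 5), ∀ j : Fin 4,
        fracLin A (x ⟨i₁.val + j.val, by have := i₁.isLt; have := j.isLt; omega⟩) =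
          x ⟨i₂.val + j.val, by have := i₂.isLt; have := j.isLt; omega⟩ := by
  simp only [fracLin_eq_smul]
  obtain ⟨A, hA0, hA1, hA2⟩ := exists_smul_standardFrame
    (x.injective.ne (by decide : (0 : Fin 6) ≠ 1)) (x.injective.ne (by decide : (0 : Fin 6) ≠ 2))
    (x.injective.ne (by decide : (1 : Fin 6) ≠ 2))
  obtain ⟨i₁, i₂, hne, hy⟩ := exists_windowsInSameOrbit_of_normalized (y := A⁻¹ • ⇑x)
    ((MulAction.injective A⁻¹).comp x.injective)
    (inv_smul_eq_iff.2 hA0.symm) (inv_smul_eq_iff.2 hA1.symm) (inv_smul_eq_iff.2 hA2.symm)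
  have hx := hy.smul A
  rw [smul_inv_smul] at hx
  exact ⟨i₁, i₂, hne, hx⟩
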